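/- arXiv:1208.6328 — 2 statements merged into one kernel-verified Lean document; each statement's English description precedes it below -/
import Mathlib

section
/- For all real x, y, z with |x| ≤ 1, |y| ≤ 1, |z| ≤ 1, setting R = x·y − z·√(1−x²)·√(1−y²), one has |√(1−x²)·y + z·x·√(1−y²)| ≤ √(1−R²) and (1−y²)(1−z²) ≤ 1−R² and (1−x²)(1−z²) ≤ 1−R². -/
open MeasureTheory Real Set
open scoped ENNReal

noncomputable section

/-- `R = x y − z √(1−x²) √(1−y²)`. -/
def Rker (x y z : ℝ) : ℝ := x * y - z * Real.sqrt (1 - x ^ 2) * Real.sqrt (1 - y ^ 2)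

/-- The kernel `B_y(x, z, R)` of the asymmetric generalised translation operator. -/
def Bker (y x z : ℝ) : ℝ :=
  2 * (Real.sqrt (1 - x ^ 2) * y + z * x * Real.sqrt (1 - y ^ 2) +
      Real.sqrt (1 - x ^ 2) * (1 - y) * (1 - z ^ 2)) ^ 2 - (1 - Rker x y z ^ 2)

/-- The asymmetric generalised translation operator `T_y(f, x)`. -/
def Tgen (y : ℝ) (f : ℝ → ℝ) (x : ℝ) : ℝ :=
  (4 / (Real.pi * (1 - x ^ 2) * (1 + y) ^ 2)) *
    ∫ z in (-1 : ℝ)..1, Bker y x z * f (Rker x y z) / Real.sqrt (1 - z ^ 2)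

/-- The Jacobi differential operator `D_{x,2,2} = (1−x²) d²/dx² − 6x d/dx`. -/
def Dop (f : ℝ → ℝ) (x : ℝ) : ℝ := (1 - x ^ 2) * deriv (deriv f) x - 6 * x * deriv f x

/-- Weighted `L^p` norm `‖f(x) (1−x²)^α‖_p` on `[−1,1]`. -/
def wnorm (p : ℝ≥0∞) (α : ℝ) (f : ℝ → ℝ) : ℝ≥0∞ :=
  eLpNorm (fun x => f x * (1 - x ^ 2) ^ α) p (volume.restrict (Set.Icc (-1 : ℝ) 1))

/-- `h` is absolutely continuous on every closed subinterval of `(−1,1)`: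
it is the integral of its derivative there. -/
def LocAC (h : ℝ → ℝ) : Prop :=
  ∀ a b : ℝ, -1 < a → a ≤ b → b < 1 →
    IntervalIntegrable (deriv h) MeasureTheory.volume a b ∧
      ∀ x ∈ Set.Icc a b, h x = h a + ∫ t in a..x, deriv h t

/-- The system `P` consists of the Jacobi polynomials for the weight `(1−x)^a (1+x)^b`,
normalised by `P n 1 = 1`. -/
def IsJacobiSystem (a b : ℝ) (P : ℕ → ℝ → ℝ) : Prop :=
  (∀ n : ℕ, ∃ q : Polynomial ℝ, q.natDegree = n ∧ ∀ x, P n x = q.eval x) ∧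
  (∀ m n : ℕ, m ≠ n →
    ∫ x in (-1 : ℝ)..1, P m x * P n x * (1 - x) ^ a * (1 + x) ^ b = 0) ∧
  (∀ n : ℕ, P n 1 = 1)

/-- Conditions on `p` and `α` in the main theorems. -/
def ParamOK (p : ℝ≥0∞) (α : ℝ) : Prop :=
  1 ≤ p ∧
  (p = 1 → 1 / 2 < α ∧ α ≤ 1) ∧
  (1 < p → p ≠ ⊤ → 1 - 1 / (2 * p.toReal) < α ∧ α < 3 / 2 - 1 / (2 * p.toReal)) ∧
  (p = ⊤ → 1 ≤ α ∧ α < 3 / 2)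

/-- Best approximation of `f` by algebraic polynomials of degree at most `n − 1`. -/
def bestE (p : ℝ≥0∞) (α : ℝ) (n : ℕ) (f : ℝ → ℝ) : ℝ≥0∞ :=
  ⨅ (q : Polynomial ℝ) (_ : q.natDegree ≤ n - 1), wnorm p α (fun x => f x - q.eval x)

/-- The generalised modulus of smoothness `ω(f, δ)`. -/
def wmod (p : ℝ≥0∞) (α : ℝ) (f : ℝ → ℝ) (δ : ℝ) : ℝ≥0∞ :=
  ⨆ t ∈ Set.Icc (-δ) δ, wnorm p α (fun x => Tgen (Real.cos t) f x - f x)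

/-- The Peetre K-functional between `L^p_α` and the weighted Sobolev-type space. -/
def Kfun (p : ℝ≥0∞) (α : ℝ) (f : ℝ → ℝ) (δ : ℝ) : ℝ≥0∞ :=
  ⨅ (g : ℝ → ℝ) (_ : LocAC (deriv g) ∧ wnorm p α g < ⊤ ∧ wnorm p α (Dop g) < ⊤),
    wnorm p α (fun x => f x - g x) + ENNReal.ofReal (δ ^ 2) * wnorm p α (Dop g)

theorem Rker_comm (x y z : ℝ) : Rker x y z = Rker y x z := by
  unfold Rker; ring

theorem one_sub_sq_nonneg_of_abs_le_one {x : ℝ} (hx : |x| ≤ 1) : 0 ≤ 1 - x ^ 2 :=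
  sub_nonneg.2 ((sq_le_one_iff_abs_le_one x).2 hx)

/-- With `x = cos α`, `y = cos β`, `R = cos α cos β - z sin α sin β` is a spherical law of
cosines, and `1 - R²` splits into a square and a product of sines squared. -/
theorem one_sub_Rker_sq {x y : ℝ} (hx : |x| ≤ 1) (hy : |y| ≤ 1) (z : ℝ) :
    1 - Rker x y z ^ 2 =
      (√(1 - x ^ 2) * y + z * x * √(1 - y ^ 2)) ^ 2 + (1 - y ^ 2) * (1 - z ^ 2) := by
  have ha := Real.sq_sqrt (one_sub_sq_nonneg_of_abs_le_one hx)
  have hb := Real.sq_sqrt (one_sub_sq_nonneg_of_abs_le_one hy)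
  unfold Rker
  linear_combination (-(z ^ 2 * √(1 - y ^ 2) ^ 2) - y ^ 2) * ha - z ^ 2 * hb

theorem abs_le_sqrt_one_sub_Rker_sq {x y z : ℝ} (hx : |x| ≤ 1) (hy : |y| ≤ 1) (hz : |z| ≤ 1) :
    |√(1 - x ^ 2) * y + z * x * √(1 - y ^ 2)| ≤ √(1 - Rker x y z ^ 2) := by
  refine Real.abs_le_sqrt ?_
  rw [one_sub_Rker_sq hx hy]
  exact le_add_of_nonneg_right <| mul_nonneg (one_sub_sq_nonneg_of_abs_le_one hy)
    (one_sub_sq_nonneg_of_abs_le_one hz)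

theorem one_sub_sq_mul_le_one_sub_Rker_sq {x y : ℝ} (hx : |x| ≤ 1) (hy : |y| ≤ 1) (z : ℝ) :
    (1 - y ^ 2) * (1 - z ^ 2) ≤ 1 - Rker x y z ^ 2 := by
  rw [one_sub_Rker_sq hx hy]
  exact le_add_of_nonneg_left (sq_nonneg _)

theorem R_inequalities (x y z : ℝ) (hx : |x| ≤ 1) (hy : |y| ≤ 1) (hz : |z| ≤ 1) :
    |Real.sqrt (1 - x ^ 2) * y + z * x * Real.sqrt (1 - y ^ 2)| ≤
        Real.sqrt (1 - Rker x y z ^ 2) ∧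
    (1 - y ^ 2) * (1 - z ^ 2) ≤ 1 - Rker x y z ^ 2 ∧
    (1 - x ^ 2) * (1 - z ^ 2) ≤ 1 - Rker x y z ^ 2 :=
  ⟨abs_le_sqrt_one_sub_Rker_sq hx hy hz, one_sub_sq_mul_le_one_sub_Rker_sq hx hy z,
    Rker_comm x y z ▸ one_sub_sq_mul_le_one_sub_Rker_sq hy hx z⟩
end
end

section
/- For the constant function 1, the generalized translation operator satisfies T_y(1, x) = 1 for every x ∈ (−1,1) and y ∈ (−1,1]. -/
open MeasureTheory Real Set
open scoped ENNReal

noncomputable section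

/-!
For fixed `x, y` the kernel `B_y(x, z, R)` is a quartic polynomial in `z`. Every polynomial
of the form `α + P'(z) (1 - z²) - z P(z)` is `√(1 - z²)` times the derivative of
`α arcsin z + P(z) √(1 - z²)`, so its integral against the Chebyshev weight `(1 - z²)^(-1/2)`
over `[-1, 1]` is `α π`; for a quartic this gives the moments `π, 0, π/2, 0, 3π/8`.
Applied to `B_y`, the integral is `π (1 - x²)(1 + y)² / 4`, which is exactly the reciprocal
of the normalising factor of `T_y`.
-/

lemma ContinuousOn.intervalIntegrable_div_sqrt_one_sub_sq {g : ℝ → ℝ}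
    (hg : ContinuousOn g (Icc (-1) 1)) :
    IntervalIntegrable (fun z => g z / √(1 - z ^ 2)) volume (-1) 1 := by
  have hinv : IntervalIntegrable (fun z : ℝ => 1 / √(1 - z ^ 2)) volume (-1) 1 := by
    refine intervalIntegral.intervalIntegrable_deriv_of_nonneg (g := arcsin) continuous_arcsin.continuousOn
      (fun z hz => ?_) (fun z _ => by positivity)
    rw [min_eq_left (by norm_num), max_eq_right (by norm_num)] at hz
    exact hasDerivAt_arcsin hz.1.ne' hz.2.ne
  simpa only [mul_one_div] using
    hinv.continuousOn_mul (by rwa [uIcc_of_le (by norm_num : (-1 : ℝ) ≤ 1)])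

lemma hasDerivAt_sqrt_one_sub_sq {z : ℝ} (hz : z ^ 2 < 1) :
    HasDerivAt (fun z => √(1 - z ^ 2)) (-z / √(1 - z ^ 2)) z := by
  refine ((hasDerivAt_pow 2 z).const_sub 1).sqrt (by linarith) |>.congr_deriv ?_
  field_simp
  ring

lemma integral_const_add_deriv_mul_div_sqrt_one_sub_sq (α : ℝ) {P P' : ℝ → ℝ}
    (hP : ∀ z, HasDerivAt P (P' z) z) (hP' : Continuous P') :
    ∫ z in (-1 : ℝ)..1, (α + P' z * (1 - z ^ 2) - z * P z) / √(1 - z ^ 2) = α * π := by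
  have hPc : Continuous P := continuous_iff_continuousAt.2 fun z => (hP z).continuousAt
  have hderiv : ∀ z ∈ Ioo (-1 : ℝ) 1,
      HasDerivAt (fun z => α * arcsin z + P z * √(1 - z ^ 2))
        ((α + P' z * (1 - z ^ 2) - z * P z) / √(1 - z ^ 2)) z := by
    intro z ⟨hz₁, hz₂⟩
    have hz : z ^ 2 < 1 := by nlinarith
    have hs : 0 < √(1 - z ^ 2) := sqrt_pos.2 (by linarith)
    refine (((hasDerivAt_arcsin hz₁.ne' hz₂.ne).const_mul α).add
      ((hP z).mul (hasDerivAt_sqrt_one_sub_sq hz))).congr_deriv ?_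
    field_simp
    rw [sq_sqrt (by linarith)]
    ring
  rw [intervalIntegral.integral_eq_sub_of_hasDerivAt_of_le (by norm_num)
    (by fun_prop) hderiv ((by fun_prop : Continuous fun z => α + P' z * (1 - z ^ 2) - z * P z)
      |>.continuousOn.intervalIntegrable_div_sqrt_one_sub_sq)]
  norm_num [arcsin_one, arcsin_neg_one]
  ring

lemma integral_quartic_div_sqrt_one_sub_sq (c₀ c₁ c₂ c₃ c₄ : ℝ) :
    ∫ z in (-1 : ℝ)..1,
        (c₀ + c₁ * z + c₂ * z ^ 2 + c₃ * z ^ 3 + c₄ * z ^ 4) / √(1 - z ^ 2) =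
      (c₀ + c₂ / 2 + 3 * c₄ / 8) * π := by
  set p₁ := -(3 * c₄ / 4 + c₂) / 2
  set p₂ := -c₃ / 3
  set p₃ := -c₄ / 4
  set p₀ := 2 * p₂ - c₁
  have hP : ∀ z, HasDerivAt (fun z => p₀ + p₁ * z + p₂ * z ^ 2 + p₃ * z ^ 3)
      (p₁ + 2 * p₂ * z + 3 * p₃ * z ^ 2) z := fun z => by
    refine ((((hasDerivAt_id z).const_mul p₁).const_add p₀).add
      ((hasDerivAt_pow 2 z).const_mul p₂)).add ((hasDerivAt_pow 3 z).const_mul p₃)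
      |>.congr_deriv ?_
    norm_num
    ring
  rw [← integral_const_add_deriv_mul_div_sqrt_one_sub_sq _ hP (by fun_prop)]
  congr 1 with z
  ring

lemma Bker_eq_quartic (x y z : ℝ) :
    let a := √(1 - x ^ 2)
    let b := √(1 - y ^ 2)
    Bker y x z = (2 * a ^ 2 + x ^ 2 * y ^ 2 - 1) + (4 * x * a * b - 2 * x * y * a * b) * z +
      (-4 * a ^ 2 + a ^ 2 * b ^ 2 + 4 * y * a ^ 2 + 2 * x ^ 2 * b ^ 2) * z ^ 2 +
      (-4 * x * a * b + 4 * x * y * a * b) * z ^ 3 +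
      (2 * a ^ 2 - 4 * y * a ^ 2 + 2 * y ^ 2 * a ^ 2) * z ^ 4 := by
  simp only [Bker, Rker]
  ring

lemma integral_Bker_div_sqrt_one_sub_sq {x y : ℝ} (hx : x ^ 2 ≤ 1) (hy : y ^ 2 ≤ 1) :
    ∫ z in (-1 : ℝ)..1, Bker y x z / √(1 - z ^ 2) = π * (1 - x ^ 2) * (1 + y) ^ 2 / 4 := by
  simp only [Bker_eq_quartic]
  rw [integral_quartic_div_sqrt_one_sub_sq]
  linear_combination (π * (3 / 4 + √(1 - y ^ 2) ^ 2 / 2 + y / 2 + 3 / 4 * y ^ 2)) *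
    sq_sqrt (sub_nonneg.2 hx) + π * (1 + x ^ 2) / 2 * sq_sqrt (sub_nonneg.2 hy)

theorem Tgen_const_one (x y : ℝ) (hx : x ∈ Set.Ioo (-1 : ℝ) 1)
    (hy : y ∈ Set.Ioc (-1 : ℝ) 1) :
    Tgen y (fun _ => (1 : ℝ)) x = 1 := by
  obtain ⟨hx₁, hx₂⟩ := hx
  obtain ⟨hy₁, hy₂⟩ := hy
  have hx' : 0 < 1 - x ^ 2 := by nlinarith
  have hy' : 0 < 1 + y := by linarith
  simp only [Tgen, mul_one]
  rw [integral_Bker_div_sqrt_one_sub_sq (by linarith) (by nlinarith)]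
  field_simp
end
end
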